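/- arXiv:2601.17712 — 2 statements merged into one kernel-verified Lean document; each statement's English description precedes it below -/
import Mathlib

section
/- Let q(Z,S,X) be square-integrable with E[q(Z,S,X) | W, S, X, G=O] = f(W,S | A=a, X, G=E) f(X | G=E) / f(W,S,X | G=O) a.s. Then for any bounded measurable function m(W,S,X), E[q(Z,S,X) · m(W,S,X) | G=O] = E[m(W,S,X) | A=a, G=E]. -/
/-!
Conditioning on `(W, S, X)` under the `G = O` law replaces `q` by the density ratio
`pE / pO` evaluated at `(W, S, X)`, since `m (W, S, X)` is measurable for that σ-algebra and
pulls out of the conditional expectation. Pushing forward along `(W, S, X)` then turns the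
integral against `pO · ν` of `(pE / pO) · m` into the integral of `m` against `pE · ν`.
-/

open MeasureTheory ProbabilityTheory

theorem integral_mul_eq_integral_condExp_mul {Ω : Type*} {m mΩ : MeasurableSpace Ω}
    {μ : Measure Ω} (hm : m ≤ mΩ) [SigmaFinite (μ.trim hm)] {q g : Ω → ℝ} {C : ℝ}
    (hq : Integrable q μ) (hg : AEStronglyMeasurable[m] g μ) (hgC : ∀ᵐ ω ∂μ, ‖g ω‖ ≤ C) :
    ∫ ω, q ω * g ω ∂μ = ∫ ω, μ[q | m] ω * g ω ∂μ := by
  have hqg : Integrable (q * g) μ := hq.mul_bdd (hg.mono hm) hgC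
  calc ∫ ω, q ω * g ω ∂μ = ∫ ω, μ[q * g | m] ω ∂μ := (integral_condExp hm).symm
    _ = ∫ ω, μ[q | m] ω * g ω ∂μ :=
      integral_congr_ae (condExp_mul_of_aestronglyMeasurable_right hg hqg hq)

theorem integral_withDensity_ofReal {α : Type*} [MeasurableSpace α] {ν : Measure α}
    {p : α → ℝ} (hp : Measurable p) (hp0 : ∀ᵐ v ∂ν, 0 ≤ p v) (f : α → ℝ) :
    ∫ v, f v ∂ν.withDensity (fun v => ENNReal.ofReal (p v)) = ∫ v, p v * f v ∂ν := by
  rw [integral_withDensity_eq_integral_toReal_smul hp.ennreal_ofReal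
    (ae_of_all _ fun _ => ENNReal.ofReal_lt_top)]
  refine integral_congr_ae ?_
  filter_upwards [hp0] with v hv
  rw [ENNReal.toReal_ofReal hv, smul_eq_mul]

theorem integral_densityRatio_mul_withDensity {α : Type*} [MeasurableSpace α] {ν : Measure α}
    {p r : α → ℝ} (hp : Measurable p) (hr : Measurable r) (hp_pos : ∀ᵐ v ∂ν, 0 < p v)
    (hr0 : ∀ᵐ v ∂ν, 0 ≤ r v) (f : α → ℝ) :
    ∫ v, r v / p v * f v ∂ν.withDensity (fun v => ENNReal.ofReal (p v))
      = ∫ v, f v ∂ν.withDensity (fun v => ENNReal.ofReal (r v)) := by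
  rw [integral_withDensity_ofReal hp (hp_pos.mono fun _ h => h.le),
    integral_withDensity_ofReal hr hr0]
  refine integral_congr_ae ?_
  filter_upwards [hp_pos] with v hv
  field_simp

theorem integral_densityRatio_mul_of_map_eq_withDensity {Ω α : Type*} {mΩ : MeasurableSpace Ω}
    [MeasurableSpace α] {μ μ' : Measure Ω} {ν : Measure α} {T : Ω → α} {p r f : α → ℝ}
    (hT : Measurable T) (hp : Measurable p) (hr : Measurable r) (hf : Measurable f)
    (hμ : μ.map T = ν.withDensity (fun v => ENNReal.ofReal (p v)))
    (hμ' : μ'.map T = ν.withDensity (fun v => ENNReal.ofReal (r v)))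
    (hp_pos : ∀ᵐ v ∂ν, 0 < p v) (hr0 : ∀ᵐ v ∂ν, 0 ≤ r v) :
    ∫ ω, r (T ω) / p (T ω) * f (T ω) ∂μ = ∫ ω, f (T ω) ∂μ' := by
  rw [← integral_map (f := fun v => r v / p v * f v) hT.aemeasurable
      ((hr.div hp).mul hf).aestronglyMeasurable,
    ← integral_map hT.aemeasurable hf.aestronglyMeasurable, hμ, hμ']
  exact integral_densityRatio_mul_withDensity hp hr hp_pos hr0 f

theorem surrogate_bridge_reweighting_general
    {Ω 𝒲 𝒮 𝒳 : Type*} {mΩ : MeasurableSpace Ω}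
    [MeasurableSpace 𝒲] [MeasurableSpace 𝒮] [MeasurableSpace 𝒳]
    (μ : Measure Ω)
    (W : Ω → 𝒲) (S : Ω → 𝒮) (X : Ω → 𝒳) (A G : Ω → Bool) (a : Bool)
    (hW : Measurable W) (hS : Measurable S) (hX : Measurable X)
    (ν : Measure (𝒲 × 𝒮 × 𝒳))
    (pO pE : 𝒲 × 𝒮 × 𝒳 → ℝ) (hpOmeas : Measurable pO) (hpEmeas : Measurable pE)
    (hpOdens : Measure.map (fun ω => (W ω, S ω, X ω)) (μ[|{ω | G ω = false}])
      = ν.withDensity (fun v => ENNReal.ofReal (pO v)))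
    (hpEdens : Measure.map (fun ω => (W ω, S ω, X ω)) (μ[|{ω | A ω = a ∧ G ω = true}])
      = ν.withDensity (fun v => ENNReal.ofReal (pE v)))
    (hpOpos : ∀ᵐ v ∂ν, 0 < pO v) (hpEnn : ∀ v, 0 ≤ pE v)
    (mWSX : MeasurableSpace Ω)
    (hWSXdef : mWSX = MeasurableSpace.comap (fun ω => (W ω, S ω, X ω)) inferInstance)
    (hWSXle : mWSX ≤ mΩ)
    (q : Ω → ℝ) (hq2 : MemLp q 2 (μ[|{ω | G ω = false}]))
    (hbridge : (μ[|{ω | G ω = false}])[q | mWSX]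
      =ᵐ[μ[|{ω | G ω = false}]]
      fun ω => pE (W ω, S ω, X ω) / pO (W ω, S ω, X ω))
    (m : 𝒲 × 𝒮 × 𝒳 → ℝ) (hmmeas : Measurable m) (hmbdd : ∃ C, ∀ v, |m v| ≤ C) :
    ∫ ω, q ω * m (W ω, S ω, X ω) ∂(μ[|{ω | G ω = false}])
      = ∫ ω, m (W ω, S ω, X ω) ∂(μ[|{ω | A ω = a ∧ G ω = true}]) := by
  obtain ⟨C, hC⟩ := hmbdd
  have hT : Measurable[mΩ] fun ω => (W ω, S ω, X ω) := hW.prodMk (hS.prodMk hX)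
  have hmT : StronglyMeasurable[mWSX] fun ω => m (W ω, S ω, X ω) :=
    hWSXdef ▸ (hmmeas.comp (comap_measurable _)).stronglyMeasurable
  calc ∫ ω, q ω * m (W ω, S ω, X ω) ∂(μ[|{ω | G ω = false}])
      = ∫ ω, (μ[|{ω | G ω = false}])[q | mWSX] ω * m (W ω, S ω, X ω)
          ∂(μ[|{ω | G ω = false}]) :=
        integral_mul_eq_integral_condExp_mul hWSXle (hq2.integrable one_le_two)
          hmT.aestronglyMeasurable (ae_of_all _ fun ω => hC _)
    _ = ∫ ω, pE (W ω, S ω, X ω) / pO (W ω, S ω, X ω) * m (W ω, S ω, X ω)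
          ∂(μ[|{ω | G ω = false}]) :=
        integral_congr_ae (hbridge.mul .rfl)
    _ = ∫ ω, m (W ω, S ω, X ω) ∂(μ[|{ω | A ω = a ∧ G ω = true}]) :=
        integral_densityRatio_mul_of_map_eq_withDensity hT hpOmeas hpEmeas hmmeas hpOdens
          hpEdens hpOpos (ae_of_all _ hpEnn)

/-- **Reweighting property of the surrogate bridge.** Let `G ∈ {E,O}`
(`true = E`, `false = O`) and `A` be the binary treatment. Suppose the law of `(W,S,X)`
under the observational sample (`G = O`) has density `pO` (positive a.e.) and the law of
`(W,S,X)` under the target sample (`A = a, G = E`) has density `pE`, both with respect to a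
common dominating σ-finite measure `ν`. If `q(Z,S,X)` is square-integrable with
`E[q | W,S,X, G=O] = pE(W,S,X)/pO(W,S,X)` a.s. (the density ratio
`f(W,S | A=a, X, G=E) f(X | G=E) / f(W,S,X | G=O)`), then for any bounded measurable
`m(W,S,X)`: `E[q(Z,S,X) · m(W,S,X) | G=O] = E[m(W,S,X) | A=a, G=E]`. -/
theorem surrogate_bridge_reweighting
    {Ω 𝒲 𝒮 𝒳 𝒵 : Type*} {mΩ : MeasurableSpace Ω}
    [MeasurableSpace 𝒲] [MeasurableSpace 𝒮] [MeasurableSpace 𝒳] [MeasurableSpace 𝒵]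
    (μ : Measure Ω) [IsProbabilityMeasure μ]
    (W : Ω → 𝒲) (S : Ω → 𝒮) (X : Ω → 𝒳) (Z : Ω → 𝒵) (A G : Ω → Bool) (a : Bool)
    (hW : Measurable W) (hS : Measurable S) (hX : Measurable X) (hZ : Measurable Z)
    (hA : Measurable A) (hG : Measurable G)
    (hO : 0 < μ {ω | G ω = false}) (hEa : 0 < μ {ω | A ω = a ∧ G ω = true})
    (ν : Measure (𝒲 × 𝒮 × 𝒳)) [SigmaFinite ν]
    (pO pE : 𝒲 × 𝒮 × 𝒳 → ℝ) (hpOmeas : Measurable pO) (hpEmeas : Measurable pE)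
    (hpOdens : Measure.map (fun ω => (W ω, S ω, X ω)) (μ[|{ω | G ω = false}])
      = ν.withDensity (fun v => ENNReal.ofReal (pO v)))
    (hpEdens : Measure.map (fun ω => (W ω, S ω, X ω)) (μ[|{ω | A ω = a ∧ G ω = true}])
      = ν.withDensity (fun v => ENNReal.ofReal (pE v)))
    (hpOpos : ∀ᵐ v ∂ν, 0 < pO v) (hpEnn : ∀ v, 0 ≤ pE v)
    (mWSX : MeasurableSpace Ω)
    (hWSXdef : mWSX = MeasurableSpace.comap (fun ω => (W ω, S ω, X ω)) inferInstance)
    (hWSXle : mWSX ≤ mΩ)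
    (q : Ω → ℝ) (hq2 : MemLp q 2 (μ[|{ω | G ω = false}]))
    (hbridge : (μ[|{ω | G ω = false}])[q | mWSX]
      =ᵐ[μ[|{ω | G ω = false}]]
      fun ω => pE (W ω, S ω, X ω) / pO (W ω, S ω, X ω))
    (m : 𝒲 × 𝒮 × 𝒳 → ℝ) (hmmeas : Measurable m) (hmbdd : ∃ C, ∀ v, |m v| ≤ C) :
    ∫ ω, q ω * m (W ω, S ω, X ω) ∂(μ[|{ω | G ω = false}])
      = ∫ ω, m (W ω, S ω, X ω) ∂(μ[|{ω | A ω = a ∧ G ω = true}]) :=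
  surrogate_bridge_reweighting_general μ W S X A G a hW hS hX ν pO pE hpOmeas hpEmeas hpOdens
    hpEdens hpOpos hpEnn mWSX hWSXdef hWSXle q hq2 hbridge m hmmeas hmbdd
end

section
/- Let G ∈ {E,O} with π₀ = P(G=E) ∈ (0,1), and suppose all joint densities exist and are positive. Assume W ⊥ (A,S) | (X,G), W ⊥ G | X, and no unobserved confounders. Then the density ratio f(W,S | A=a, X, G=E) f(X | G=E) / f(W,S,X | G=O) equals f(S | A=a, X, G=E) f(X | G=E) / f(S,X | G=O), i.e., it does not depend on W; and this ratio further equals [f(A=a | S,X,G=E)/f(A=a | X,G=E)] · [f(G=E | S,X)/f(G=O | S,X)] · [f(G=O)/f(G=E)]. -/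
/-- Suppose all joint densities exist and are positive, `π₀ = P(G=E) ∈ (0,1)`,
`W ⊥ (A,S) | (X,G)`, `W ⊥ G | X`, and there are no unobserved confounders. The conditional
independences and the chain/Bayes rules for densities are encoded as the factorization
hypotheses below. Then the density ratio
`f(W,S | A=a, X, G=E) f(X | G=E) / f(W,S,X | G=O)` equals
`f(S | A=a, X, G=E) f(X | G=E) / f(S,X | G=O)` (it does not depend on `W`), and this ratio
further equals
`[f(A=a | S,X,G=E)/f(A=a | X,G=E)] · [f(G=E | S,X)/f(G=O | S,X)] · [f(G=O)/f(G=E)]`. -/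
theorem surrogate_bridge_reduces_to_surrogate_score
    {𝒲 𝒮 𝒳 : Type*}
    -- density functions
    (fWS_aXE : 𝒲 → 𝒮 → 𝒳 → ℝ)   -- f(w,s | A=a, x, G=E)
    (fW_XE fW_XO : 𝒲 → 𝒳 → ℝ)    -- f(w | x, G=E), f(w | x, G=O)
    (fW_SXO : 𝒲 → 𝒮 → 𝒳 → ℝ)     -- f(w | s, x, G=O)
    (fS_aXE : 𝒮 → 𝒳 → ℝ)          -- f(s | A=a, x, G=E)
    (fX_E : 𝒳 → ℝ)                 -- f(x | G=E)
    (fWSX_O : 𝒲 → 𝒮 → 𝒳 → ℝ)     -- f(w,s,x | G=O)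
    (fSX_O fSX_E fS_XE fSX : 𝒮 → 𝒳 → ℝ)
    -- f(s,x | G=O), f(s,x | G=E), f(s | x, G=E), f(s,x)
    (fA_SXE : 𝒮 → 𝒳 → ℝ)          -- f(A=a | s, x, G=E)
    (fA_XE : 𝒳 → ℝ)                -- f(A=a | x, G=E)
    (fGE_SX fGO_SX : 𝒮 → 𝒳 → ℝ)  -- f(G=E | s, x), f(G=O | s, x)
    (πE πO : ℝ)                     -- f(G=E), f(G=O)
    -- positivity of all densities
    (hpos : ∀ w s x, 0 < fWS_aXE w s x ∧ 0 < fW_XE w x ∧ 0 < fW_XO w x ∧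
      0 < fW_SXO w s x ∧ 0 < fS_aXE s x ∧ 0 < fX_E x ∧ 0 < fWSX_O w s x ∧
      0 < fSX_O s x ∧ 0 < fSX_E s x ∧ 0 < fS_XE s x ∧ 0 < fSX s x ∧
      0 < fA_SXE s x ∧ 0 < fA_XE x ∧ 0 < fGE_SX s x ∧ 0 < fGO_SX s x)
    (hπE : 0 < πE) (hπO : 0 < πO) (hπ : πE + πO = 1)
    -- chain rule + W ⊥ (A,S) | (X, G=E)
    (h1 : ∀ w s x, fWS_aXE w s x = fW_XE w x * fS_aXE s x)
    -- chain rule in the observational sample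
    (h2 : ∀ w s x, fWSX_O w s x = fW_SXO w s x * fSX_O s x)
    -- W ⊥ S | (X, G=O)
    (h3 : ∀ w s x, fW_SXO w s x = fW_XO w x)
    -- W ⊥ G | X
    (h4 : ∀ w x, fW_XE w x = fW_XO w x)
    -- Bayes: f(s | a, x, E) f(a | x, E) = f(a | s, x, E) f(s | x, E)
    (h5 : ∀ s x, fS_aXE s x * fA_XE x = fA_SXE s x * fS_XE s x)
    -- chain rule: f(s,x | E) = f(s | x, E) f(x | E)
    (h6 : ∀ s x, fSX_E s x = fS_XE s x * fX_E x)
    -- Bayes: f(s,x | G=g) π_g = f(G=g | s,x) f(s,x)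
    (h7E : ∀ s x, fSX_E s x * πE = fGE_SX s x * fSX s x)
    (h7O : ∀ s x, fSX_O s x * πO = fGO_SX s x * fSX s x) :
    ∀ w s x,
      (fWS_aXE w s x * fX_E x / fWSX_O w s x
        = fS_aXE s x * fX_E x / fSX_O s x) ∧
      (fWS_aXE w s x * fX_E x / fWSX_O w s x
        = (fA_SXE s x / fA_XE x) * (fGE_SX s x / fGO_SX s x) * (πO / πE)) := by
  intro w s x
  obtain ⟨p1,p2,p3,p4,p5,p6,p7,p8,p9,p10,p11,p12,p13,p14,p15⟩ := hpos w s x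
  have key : fWS_aXE w s x * fX_E x / fWSX_O w s x = fS_aXE s x * fX_E x / fSX_O s x := by
    rw [h1, h2, h3, h4]
    field_simp
  refine ⟨key, key.trans ?_⟩
  have h5' := h5 s x
  have h6' := h6 s x
  have hE := h7E s x
  have hO := h7O s x
  field_simp
  apply mul_right_cancel₀ p11.ne'
  linear_combination (fX_E x * fGO_SX s x * πE * fSX s x) * h5'
    - (fA_SXE s x * fGO_SX s x * πE * fSX s x) * h6'
    + (fA_SXE s x * fGO_SX s x * fSX s x) * hE
    - (fA_SXE s x * fGE_SX s x * fSX s x) * hO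
end
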